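/- (Deterministic estimation oracle inequality.) Let X, ε be n×p real matrices (n ≥ 1) and G₀ a p×p real matrix with X = X G₀ + ε. Let S ⊆ {1,…,p}² contain the support of G₀ with |S| ≤ s² for some integer s ≥ 1. Let λ > 0, let 𝒢 be a set of p×p matrices containing G₀, and let Ĝ ∈ 𝒢 minimize G ↦ (1/n)‖X(I − G)‖_F² + λ‖G‖₁ over 𝒢; set Δ = Ĝ − G₀. Assume: (i) the cross-term bound (2/n)·|trace(εᵀ X Δ)| ≤ (λ/2)‖Δ‖₁; and (ii) the restricted eigenvalue condition: there is κ > 0 such that for every p×p matrix M with ‖M_{S^C}‖₁ ≤ 3‖M_S‖₁ one has (1/√n)‖XM‖_F ≥ κ‖M_S‖_F. Then ‖Ĝ − G₀‖₁ ≤ 6·λ s² / κ². -/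
import Mathlib


open Matrix BigOperators

/-- Entrywise Frobenius norm of a real matrix. -/
noncomputable def frob {n p : ℕ} (A : Matrix (Fin n) (Fin p) ℝ) : ℝ :=
  Real.sqrt (∑ i, ∑ j, (A i j) ^ 2)

/-- Entrywise ℓ1 norm of a real matrix. -/
noncomputable def l1 {n p : ℕ} (A : Matrix (Fin n) (Fin p) ℝ) : ℝ :=
  ∑ i, ∑ j, |A i j|

/-- `P` is a permutation matrix. -/
def IsPermMatrix {p : ℕ} (P : Matrix (Fin p) (Fin p) ℝ) : Prop :=
  ∃ σ : Equiv.Perm (Fin p), ∀ i j, P i j = if i = σ j then 1 else 0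

/-- `T` is strictly lower triangular. -/
def StrictLowerTri {p : ℕ} (T : Matrix (Fin p) (Fin p) ℝ) : Prop :=
  ∀ i j : Fin p, i ≤ j → T i j = 0

/-- The directed graph with an edge `i → j` whenever `G i j ≠ 0` is acyclic
(no directed cycle, self-loops included). -/
def AcyclicMatrix {p : ℕ} (G : Matrix (Fin p) (Fin p) ℝ) : Prop :=
  ∀ i : Fin p, ¬ Relation.TransGen (fun a b : Fin p => G a b ≠ 0) i i

/-- The matrix equal to `M` on the entries indexed by `S` and zero elsewhere. -/
def restrictTo {p : ℕ} (S : Finset (Fin p × Fin p)) (M : Matrix (Fin p) (Fin p) ℝ) :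
    Matrix (Fin p) (Fin p) ℝ :=
  fun i j => if (i, j) ∈ S then M i j else 0

lemma frob_nonneg {n p : ℕ} (A : Matrix (Fin n) (Fin p) ℝ) : 0 ≤ frob A :=
  Real.sqrt_nonneg _

lemma frob_sq {n p : ℕ} (A : Matrix (Fin n) (Fin p) ℝ) :
    frob A ^ 2 = ∑ i, ∑ j, (A i j) ^ 2 :=
  Real.sq_sqrt (by positivity)

lemma trace_transpose_mul {n p : ℕ} (A B : Matrix (Fin n) (Fin p) ℝ) :
    Matrix.trace (Aᵀ * B) = ∑ i, ∑ j, A i j * B i j := by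
  rw [Matrix.trace]
  simp only [Matrix.diag, Matrix.mul_apply, Matrix.transpose_apply]
  exact Finset.sum_comm

lemma frob_sub_sq {n p : ℕ} (A B : Matrix (Fin n) (Fin p) ℝ) :
    frob (A - B) ^ 2 = frob A ^ 2 - 2 * (∑ i, ∑ j, A i j * B i j) + frob B ^ 2 := by
  simp only [frob_sq, Matrix.sub_apply]
  rw [Finset.mul_sum, ← Finset.sum_sub_distrib, ← Finset.sum_add_distrib]
  refine Finset.sum_congr rfl fun i _ => ?_
  rw [Finset.mul_sum, ← Finset.sum_sub_distrib, ← Finset.sum_add_distrib]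
  refine Finset.sum_congr rfl fun j _ => ?_
  ring

lemma l1_nonneg {n p : ℕ} (A : Matrix (Fin n) (Fin p) ℝ) : 0 ≤ l1 A := by
  unfold l1; positivity

lemma l1_restrict_le {p : ℕ} (S : Finset (Fin p × Fin p)) (s : ℕ)
    (hcard : S.card ≤ s ^ 2) (M : Matrix (Fin p) (Fin p) ℝ) :
    l1 (restrictTo S M) ≤ s * frob (restrictTo S M) := by
  set R := restrictTo S M with hR
  have e1 : l1 R = ∑ q : Fin p × Fin p, |R q.1 q.2| :=
    (Fintype.sum_prod_type fun q => |R q.1 q.2|).symm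
  have hl1 : l1 R = ∑ q ∈ S, |R q.1 q.2| := by
    rw [e1]
    refine (Finset.sum_subset (Finset.subset_univ S) fun q _ hq => ?_).symm
    have : R q.1 q.2 = 0 := by simp [hR, restrictTo, hq]
    simp [this]
  have e2 : frob R ^ 2 = ∑ q : Fin p × Fin p, (R q.1 q.2) ^ 2 := by
    rw [frob_sq]
    exact (Fintype.sum_prod_type fun q => (R q.1 q.2) ^ 2).symm
  have hsq : (l1 R) ^ 2 ≤ (s : ℝ) ^ 2 * frob R ^ 2 := by
    rw [hl1]
    have c1 : (∑ q ∈ S, |R q.1 q.2|) ^ 2 ≤ S.card * ∑ q ∈ S, |R q.1 q.2| ^ 2 :=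
      sq_sum_le_card_mul_sum_sq
    have c2 : (S.card : ℝ) * ∑ q ∈ S, |R q.1 q.2| ^ 2 ≤
        (s : ℝ) ^ 2 * ∑ q ∈ S, |R q.1 q.2| ^ 2 := by
      refine mul_le_mul_of_nonneg_right ?_ (Finset.sum_nonneg fun q _ => sq_nonneg _)
      exact_mod_cast hcard
    have c3 : ∑ q ∈ S, |R q.1 q.2| ^ 2 = ∑ q ∈ S, (R q.1 q.2) ^ 2 :=
      Finset.sum_congr rfl fun q _ => sq_abs _
    have c4 : ∑ q ∈ S, (R q.1 q.2) ^ 2 ≤ ∑ q : Fin p × Fin p, (R q.1 q.2) ^ 2 :=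
      Finset.sum_le_sum_of_subset_of_nonneg (Finset.subset_univ S)
        (fun q _ _ => sq_nonneg _)
    rw [e2]
    have hs2 : (0:ℝ) ≤ (s : ℝ) ^ 2 := sq_nonneg _
    nlinarith
  have h1 : 0 ≤ l1 R := l1_nonneg R
  have hsnn : (0:ℝ) ≤ (s : ℝ) := Nat.cast_nonneg s
  nlinarith [frob_nonneg R, mul_nonneg hsnn (frob_nonneg R)]

theorem stmt_16 {n p : ℕ} (hn : 1 ≤ n) (X eps : Matrix (Fin n) (Fin p) ℝ)
    (G₀ : Matrix (Fin p) (Fin p) ℝ) (hmodel : X = X * G₀ + eps)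
    (S : Finset (Fin p × Fin p)) (hsupp : ∀ i j : Fin p, (i, j) ∉ S → G₀ i j = 0)
    (s : ℕ) (hs : 1 ≤ s) (hcard : S.card ≤ s ^ 2)
    (lam : ℝ) (hlam : 0 < lam)
    (𝒢 : Set (Matrix (Fin p) (Fin p) ℝ)) (hG₀ : G₀ ∈ 𝒢)
    (Ghat : Matrix (Fin p) (Fin p) ℝ) (hGhat : Ghat ∈ 𝒢)
    (hmin : ∀ G ∈ 𝒢,
      (1 / (n : ℝ)) * (frob (X * (1 - Ghat))) ^ 2 + lam * l1 Ghat ≤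
        (1 / (n : ℝ)) * (frob (X * (1 - G))) ^ 2 + lam * l1 G)
    (hcross : (2 / (n : ℝ)) * |Matrix.trace (epsᵀ * (X * (Ghat - G₀)))| ≤
      (lam / 2) * l1 (Ghat - G₀))
    (κ : ℝ) (hκ : 0 < κ)
    (hRE : ∀ M : Matrix (Fin p) (Fin p) ℝ,
      l1 (M - restrictTo S M) ≤ 3 * l1 (restrictTo S M) →
        κ * frob (restrictTo S M) ≤ (1 / Real.sqrt n) * frob (X * M)) :
    l1 (Ghat - G₀) ≤ 6 * lam * (s : ℝ) ^ 2 / κ ^ 2 := by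
  have hnpos : (0 : ℝ) < n := by exact_mod_cast hn
  set Δ : Matrix (Fin p) (Fin p) ℝ := Ghat - G₀ with hΔ
  have heps : eps = X - X * G₀ := by
    rw [eq_sub_iff_add_eq, add_comm]; exact hmodel.symm
  have hXG0 : X * (1 - G₀) = eps := by
    rw [Matrix.mul_sub, Matrix.mul_one, heps]
  have hXGhat : X * (1 - Ghat) = eps - X * Δ := by
    rw [Matrix.mul_sub, Matrix.mul_one, heps, hΔ, Matrix.mul_sub]
    abel
  set T : ℝ := Matrix.trace (epsᵀ * (X * Δ)) with hTdef
  have hT : T = ∑ i, ∑ j, eps i j * (X * Δ) i j := trace_transpose_mul eps (X * Δ)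
  -- basic inequality from minimality at G₀
  have hbasic := hmin G₀ hG₀
  rw [hXGhat, hXG0, frob_sub_sq, ← hT] at hbasic
  have hexp : (1 / (n:ℝ)) * (frob eps ^ 2 - 2 * T + frob (X * Δ) ^ 2) =
      (1 / (n:ℝ)) * frob eps ^ 2 - (2 / (n:ℝ)) * T + (1 / (n:ℝ)) * frob (X * Δ) ^ 2 := by
    ring
  rw [hexp] at hbasic
  have hkey : (1 / (n : ℝ)) * frob (X * Δ) ^ 2 ≤
      (2 / (n : ℝ)) * T + lam * (l1 G₀ - l1 Ghat) := by linarith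
  set ΔS := restrictTo S Δ with hΔS
  -- support decomposition facts
  have hsplit : l1 Δ = l1 ΔS + l1 (Δ - ΔS) := by
    rw [l1, l1, l1, ← Finset.sum_add_distrib]
    refine Finset.sum_congr rfl fun i _ => ?_
    rw [← Finset.sum_add_distrib]
    refine Finset.sum_congr rfl fun j _ => ?_
    by_cases h : (i, j) ∈ S
    · simp [hΔS, restrictTo, h, Matrix.sub_apply]
    · simp [hΔS, restrictTo, h, Matrix.sub_apply]
  have hsuppineq : l1 G₀ - l1 Ghat ≤ l1 ΔS - l1 (Δ - ΔS) := by
    rw [l1, l1, l1, l1, ← Finset.sum_sub_distrib, ← Finset.sum_sub_distrib]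
    refine Finset.sum_le_sum fun i _ => ?_
    rw [← Finset.sum_sub_distrib, ← Finset.sum_sub_distrib]
    refine Finset.sum_le_sum fun j _ => ?_
    by_cases h : (i, j) ∈ S
    · simp only [hΔS, restrictTo, h, if_pos, Matrix.sub_apply, sub_self, abs_zero]
      have h1 := abs_sub_abs_le_abs_sub (G₀ i j) (Ghat i j)
      have h2 : |G₀ i j - Ghat i j| = |Δ i j| := by
        rw [hΔ, Matrix.sub_apply, abs_sub_comm]
      simp only [sub_zero]
      linarith
    · have hz : G₀ i j = 0 := hsupp i j h
      have hd : Δ i j = Ghat i j := by rw [hΔ, Matrix.sub_apply, hz, sub_zero]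
      simp only [hΔS, restrictTo, h, if_neg, Matrix.sub_apply, not_false_iff, abs_zero,
        sub_zero, hz]
      simp [hd]
  -- master inequality
  have hfnn : 0 ≤ frob (X * Δ) ^ 2 := sq_nonneg _
  have habs : (2 / (n:ℝ)) * T ≤ (2 / (n:ℝ)) * |T| :=
    mul_le_mul_of_nonneg_left (le_abs_self T) (by positivity)
  have hmaster : (1 / (n : ℝ)) * frob (X * Δ) ^ 2 ≤
      (3 * lam / 2) * l1 ΔS - (lam / 2) * l1 (Δ - ΔS) := by
    have hl : lam * (l1 G₀ - l1 Ghat) ≤ lam * (l1 ΔS - l1 (Δ - ΔS)) :=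
      mul_le_mul_of_nonneg_left hsuppineq hlam.le
    have hc : (2 / (n:ℝ)) * |T| ≤ (lam / 2) * l1 Δ := hcross
    have hld : (lam / 2) * l1 Δ = (lam / 2) * l1 ΔS + (lam / 2) * l1 (Δ - ΔS) := by
      rw [hsplit]; ring
    linarith
  have hcone : l1 (Δ - ΔS) ≤ 3 * l1 ΔS := by
    have h0 : 0 ≤ (1 / (n : ℝ)) * frob (X * Δ) ^ 2 := by positivity
    have h2 : (lam / 2) * l1 (Δ - ΔS) ≤ (lam / 2) * (3 * l1 ΔS) := by linarith
    exact le_of_mul_le_mul_left h2 (by positivity)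
  -- restricted eigenvalue
  have hre : κ * frob ΔS ≤ (1 / Real.sqrt n) * frob (X * Δ) := by
    have := hRE Δ (by rw [← hΔS]; exact hcone)
    rwa [← hΔS] at this
  -- Cauchy-Schwarz
  have hcs : l1 ΔS ≤ s * frob ΔS := l1_restrict_le S s hcard Δ
  set F : ℝ := (1 / Real.sqrt n) * frob (X * Δ) with hF
  have hsqrtn : (0:ℝ) < Real.sqrt n := Real.sqrt_pos.mpr hnpos
  have hFnn : 0 ≤ F := by
    rw [hF]
    exact mul_nonneg (by positivity) (frob_nonneg _)
  have hF2 : F ^ 2 = (1 / (n : ℝ)) * frob (X * Δ) ^ 2 := by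
    rw [hF, mul_pow, div_pow, one_pow, Real.sq_sqrt hnpos.le]
  have hchain : F ^ 2 ≤ (3 * lam / 2) * l1 ΔS := by
    rw [hF2]
    have h0 : 0 ≤ (lam / 2) * l1 (Δ - ΔS) :=
      mul_nonneg (by positivity) (l1_nonneg _)
    linarith
  have hsnn : (0:ℝ) ≤ (s : ℝ) := Nat.cast_nonneg s
  have hfrobSnn : 0 ≤ frob ΔS := frob_nonneg ΔS
  -- F^2 ≤ (3 lam s / (2 κ)) * F
  have hchain2 : 2 * κ * F ^ 2 ≤ 3 * lam * s * F := by
    have h1 : F ^ 2 ≤ (3 * lam / 2) * ((s:ℝ) * frob ΔS) :=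
      hchain.trans (mul_le_mul_of_nonneg_left hcs (by positivity))
    have h2 := mul_le_mul_of_nonneg_left h1 (by positivity : (0:ℝ) ≤ 2 * κ)
    have h3 := mul_le_mul_of_nonneg_left hre (mul_nonneg (by positivity : (0:ℝ) ≤ 3 * lam) hsnn)
    have h4 : 2 * κ * ((3 * lam / 2) * ((s:ℝ) * frob ΔS)) =
        3 * lam * (s:ℝ) * (κ * frob ΔS) := by ring
    have h5 : 3 * lam * (s:ℝ) * (κ * frob ΔS) ≤ 3 * lam * (s:ℝ) * F := by
      calc 3 * lam * (s:ℝ) * (κ * frob ΔS)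
          = 3 * lam * (s:ℝ) * (κ * frob ΔS) := rfl
        _ ≤ 3 * lam * (s:ℝ) * F := by
            refine mul_le_mul_of_nonneg_left hre ?_
            positivity
    linarith
  have hFle : F * (2 * κ) ≤ 3 * lam * (s:ℝ) := by
    rcases eq_or_lt_of_le hFnn with h0 | h0
    · rw [← h0, zero_mul]
      positivity
    · refine le_of_mul_le_mul_right ?_ h0
      calc F * (2 * κ) * F = 2 * κ * F ^ 2 := by ring
        _ ≤ 3 * lam * (s:ℝ) * F := hchain2
  have hfrobSle : 2 * (κ ^ 2 * frob ΔS) ≤ 3 * lam * (s:ℝ) := by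
    have h1 : κ * frob ΔS * (2 * κ) ≤ F * (2 * κ) :=
      mul_le_mul_of_nonneg_right hre (by positivity)
    have h2 : κ * frob ΔS * (2 * κ) = 2 * (κ ^ 2 * frob ΔS) := by ring
    linarith
  have hl1S : 2 * (κ ^ 2 * l1 ΔS) ≤ 3 * lam * (s:ℝ) ^ 2 := by
    have h1 : κ ^ 2 * l1 ΔS ≤ κ ^ 2 * ((s:ℝ) * frob ΔS) :=
      mul_le_mul_of_nonneg_left hcs (sq_nonneg κ)
    have h3 : (s:ℝ) * (2 * (κ ^ 2 * frob ΔS)) ≤ (s:ℝ) * (3 * lam * (s:ℝ)) :=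
      mul_le_mul_of_nonneg_left hfrobSle hsnn
    have e1 : κ ^ 2 * ((s:ℝ) * frob ΔS) * 2 = (s:ℝ) * (2 * (κ ^ 2 * frob ΔS)) := by ring
    have e2 : (s:ℝ) * (3 * lam * (s:ℝ)) = 3 * lam * (s:ℝ) ^ 2 := by ring
    linarith
  have hκ2 : (0:ℝ) < κ ^ 2 := by positivity
  have hSfin : l1 ΔS ≤ 3 * lam * (s:ℝ) ^ 2 / (2 * κ ^ 2) := by
    rw [le_div_iff₀ (by positivity : (0:ℝ) < 2 * κ ^ 2)]
    linarith
  calc l1 Δ = l1 ΔS + l1 (Δ - ΔS) := hsplit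
    _ ≤ 4 * l1 ΔS := by linarith
    _ ≤ 4 * (3 * lam * (s:ℝ) ^ 2 / (2 * κ ^ 2)) := by linarith
    _ = 6 * lam * (s : ℝ) ^ 2 / κ ^ 2 := by
        field_simp
        ring
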